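/- With m as above and c₁ > c₂ > c₃ > c₄ > 0, the ratios (m₁ⁿ(c)² − m₂ⁿ(c)²)/(m₃ⁿ(c)² − m₄ⁿ(c)²) and (m₁ⁿ(c)² − m₃ⁿ(c)²)/(m₂ⁿ(c)² − m₄ⁿ(c)²) both converge to 1 as n → ∞. -/
import Mathlib
open Filter Real

noncomputable def m (u : ℝ × ℝ × ℝ × ℝ) : ℝ × ℝ × ℝ × ℝ :=
  ((u.1 + u.2.1 + u.2.2.1 + u.2.2.2) / 4,
   Real.sqrt ((u.1 + u.2.2.1) * (u.2.1 + u.2.2.2)) / 2,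
   Real.sqrt ((u.1 + u.2.1) * (u.2.2.1 + u.2.2.2)) / 2,
   Real.sqrt ((u.1 * u.2.2.2 + u.2.1 * u.2.2.1) / 2))

def Ord4 (u : ℝ × ℝ × ℝ × ℝ) : Prop :=
  0 < u.2.2.2 ∧ u.2.2.2 < u.2.2.1 ∧ u.2.2.1 < u.2.1 ∧ u.2.1 < u.1

lemma ord_m {u : ℝ × ℝ × ℝ × ℝ} (h : Ord4 u) : Ord4 (m u) := by
  obtain ⟨a, b, c, d⟩ := u
  obtain ⟨hd, hdc, hcb, hba⟩ := h
  simp only [Ord4, m] at *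
  have hc : 0 < c := hd.trans hdc
  have hb : 0 < b := hc.trans hcb
  have ha : 0 < a := hb.trans hba
  refine ⟨?_, ?_, ?_, ?_⟩
  · exact Real.sqrt_pos.mpr (by positivity)
  · have h3 : (0:ℝ) < Real.sqrt ((a + b) * (c + d)) / 2 := by positivity
    rw [Real.sqrt_lt' h3, div_pow]
    rw [Real.sq_sqrt (by positivity)]
    rw [lt_div_iff₀ (by norm_num)]
    nlinarith [mul_pos (sub_pos.mpr hba) (sub_pos.mpr hdc)]
  · have := Real.sqrt_lt_sqrt (by positivity : (0:ℝ) ≤ (a + b) * (c + d))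
      (by nlinarith [mul_pos (sub_pos.mpr (hdc.trans (hcb.trans hba))) (sub_pos.mpr hcb)] :
        (a + b) * (c + d) < (a + c) * (b + d))
    linarith
  · have h3 : (0:ℝ) < (a + b + c + d) / 2 := by positivity
    have h4 : Real.sqrt ((a + c) * (b + d)) < (a + b + c + d) / 2 := by
      rw [Real.sqrt_lt' h3]
      nlinarith [sq_nonneg (a + c - b - d), mul_pos (sub_pos.mpr hba) (sub_pos.mpr hdc)]
    linarith

lemma m1_le {u : ℝ × ℝ × ℝ × ℝ} (h : Ord4 u) : (m u).1 ≤ u.1 := by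
  obtain ⟨a, b, c, d⟩ := u
  obtain ⟨hd, hdc, hcb, hba⟩ := h
  simp only [m] at *
  linarith

lemma m4_ge {u : ℝ × ℝ × ℝ × ℝ} (h : Ord4 u) : u.2.2.2 ≤ (m u).2.2.2 := by
  obtain ⟨a, b, c, d⟩ := u
  obtain ⟨hd, hdc, hcb, hba⟩ := h
  simp only [m] at *
  rw [Real.le_sqrt' hd]
  nlinarith

lemma m_diam {u : ℝ × ℝ × ℝ × ℝ} (h : Ord4 u) :
    (m u).1 - (m u).2.2.2 ≤ 3 / 4 * (u.1 - u.2.2.2) := by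
  have h4 := m4_ge h
  obtain ⟨a, b, c, d⟩ := u
  obtain ⟨hd, hdc, hcb, hba⟩ := h
  simp only [m] at *
  linarith

-- square identities
lemma sq_id12 {u : ℝ × ℝ × ℝ × ℝ} (h : Ord4 u) :
    (m u).1 ^ 2 - (m u).2.1 ^ 2 = ((u.1 - u.2.1) + (u.2.2.1 - u.2.2.2)) ^ 2 / 16 := by
  obtain ⟨a, b, c, d⟩ := u
  obtain ⟨hd, hdc, hcb, hba⟩ := h
  simp only [m]
  rw [div_pow, div_pow, Real.sq_sqrt (by nlinarith)]
  ring

lemma sq_id34 {u : ℝ × ℝ × ℝ × ℝ} (h : Ord4 u) :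
    (m u).2.2.1 ^ 2 - (m u).2.2.2 ^ 2 = (u.1 - u.2.1) * (u.2.2.1 - u.2.2.2) / 4 := by
  obtain ⟨a, b, c, d⟩ := u
  obtain ⟨hd, hdc, hcb, hba⟩ := h
  simp only [m]
  rw [div_pow, Real.sq_sqrt (by nlinarith), Real.sq_sqrt (by nlinarith)]
  ring

lemma sq_id13 {u : ℝ × ℝ × ℝ × ℝ} (h : Ord4 u) :
    (m u).1 ^ 2 - (m u).2.2.1 ^ 2 = ((u.1 - u.2.2.1) + (u.2.1 - u.2.2.2)) ^ 2 / 16 := by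
  obtain ⟨a, b, c, d⟩ := u
  obtain ⟨hd, hdc, hcb, hba⟩ := h
  simp only [m]
  rw [div_pow, div_pow, Real.sq_sqrt (by nlinarith)]
  ring

lemma sq_id24 {u : ℝ × ℝ × ℝ × ℝ} (h : Ord4 u) :
    (m u).2.1 ^ 2 - (m u).2.2.2 ^ 2 = (u.1 - u.2.2.1) * (u.2.1 - u.2.2.2) / 4 := by
  obtain ⟨a, b, c, d⟩ := u
  obtain ⟨hd, hdc, hcb, hba⟩ := h
  simp only [m]
  rw [div_pow, Real.sq_sqrt (by nlinarith), Real.sq_sqrt (by nlinarith)]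
  ring

lemma half_contract (a b : ℕ → ℝ) (ha : ∀ n, 0 ≤ a n) (hb : Tendsto b atTop (nhds 0))
    (N : ℕ) (h : ∀ n, N ≤ n → a (n + 1) ≤ a n / 2 + b n) :
    Tendsto a atTop (nhds 0) := by
  rw [Metric.tendsto_atTop]
  intro ε hε
  have hb' : ∀ᶠ n in atTop, |b n| < ε / 4 := by
    have := Metric.tendsto_atTop.mp hb (ε / 4) (by linarith)
    obtain ⟨M, hM⟩ := this
    refine eventually_atTop.mpr ⟨M, fun n hn => ?_⟩
    simpa [Real.dist_eq] using hM n hn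
  obtain ⟨N₁, hN₁⟩ := eventually_atTop.mp hb'
  set N₂ := max N N₁ with hN₂
  have key : ∀ k, a (N₂ + k) ≤ a N₂ / 2 ^ k + ε / 2 := by
    intro k
    induction k with
    | zero => simpa using by linarith [ha N₂, hε]
    | succ k ih =>
      have h1 : a (N₂ + k + 1) ≤ a (N₂ + k) / 2 + b (N₂ + k) :=
        h _ (le_trans (le_max_left _ _) (Nat.le_add_right _ _))
      have h2 : b (N₂ + k) ≤ |b (N₂ + k)| := le_abs_self _
      have h3 : |b (N₂ + k)| < ε / 4 := hN₁ _ (le_trans (le_max_right _ _) (Nat.le_add_right _ _))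
      have : a (N₂ + (k + 1)) = a (N₂ + k + 1) := by ring_nf
      rw [this]
      have hp : (0:ℝ) < 2 ^ k := by positivity
      calc a (N₂ + k + 1) ≤ a (N₂ + k) / 2 + b (N₂ + k) := h1
        _ ≤ (a N₂ / 2 ^ k + ε / 2) / 2 + ε / 4 := by linarith
        _ = a N₂ / 2 ^ (k + 1) + ε / 2 := by rw [pow_succ]; ring
  obtain ⟨K, hK⟩ := pow_unbounded_of_one_lt (a N₂ / (ε / 2)) (by norm_num : (1:ℝ) < 2)
  refine ⟨N₂ + K, fun n hn => ?_⟩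
  obtain ⟨k, rfl⟩ := Nat.exists_eq_add_of_le (le_trans (Nat.le_add_right _ _) hn : N₂ ≤ n)
  have hkK : K ≤ k := by omega
  have h1 : a N₂ / 2 ^ k ≤ a N₂ / 2 ^ K :=
    div_le_div_of_nonneg_left (ha N₂) (by positivity) (pow_le_pow_right₀ (by norm_num) hkK)
  have h2 : a N₂ / 2 ^ K < ε / 2 := by
    rw [div_lt_iff₀ (by positivity)]
    rw [div_lt_iff₀ (by linarith : (0:ℝ) < ε / 2)] at hK
    linarith
  have h3 := key k
  rw [Real.dist_eq, sub_zero, abs_of_nonneg (ha _)]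
  linarith

lemma ratio_tendsto (r e : ℕ → ℝ) (hr : ∀ n, 0 < r n) (he0 : ∀ n, 0 < e n)
    (he1 : ∀ n, e n ≤ 1) (helim : Tendsto e atTop (nhds 1))
    (hrec : ∀ n, r (n + 1) = (1 + r n) ^ 2 / (4 * r n) * e (n + 1)) :
    Tendsto r atTop (nhds 1) := by
  have hg1 : ∀ n, 1 ≤ (1 + r n) ^ 2 / (4 * r n) := by
    intro n
    rw [le_div_iff₀ (by nlinarith [hr n] : (0:ℝ) < 4 * r n)]
    nlinarith [sq_nonneg (1 - r n)]
  -- eventually e n ≥ 1/2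
  have hev : ∀ᶠ n in atTop, (1:ℝ)/2 < e n :=
    helim.eventually (eventually_gt_nhds (by norm_num))
  obtain ⟨N, hN⟩ := eventually_atTop.mp hev
  have hlow : ∀ n, N + 1 ≤ n → 1/2 ≤ r n := by
    intro n hn
    obtain ⟨k, rfl⟩ := Nat.exists_eq_add_of_le hn
    have : r (N + 1 + k) = r (N + k + 1) := by ring_nf
    rw [this, hrec]
    have := hN (N + k + 1) (by omega)
    nlinarith [hg1 (N + k), he0 (N + k + 1)]
  -- g bound for r ≥ 1/2
  have hgb : ∀ x : ℝ, 1/2 ≤ x → (1 + x) ^ 2 / (4 * x) ≤ 1 + |x - 1| / 2 := by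
    intro x hx
    rw [div_le_iff₀ (by linarith)]
    rcases abs_cases (x - 1) with ⟨h1, h2⟩ | ⟨h1, h2⟩ <;> rw [h1] <;> nlinarith
  -- upper bound M for r on [N+1, ∞)
  set M := max (r (N + 1)) 2 with hM
  have hM2 : (2:ℝ) ≤ M := le_max_right _ _
  have hup : ∀ n, N + 1 ≤ n → r n ≤ M := by
    intro n hn
    obtain ⟨k, rfl⟩ := Nat.exists_eq_add_of_le hn
    induction k with
    | zero => rw [Nat.add_zero]; exact le_max_left _ _
    | succ k ih =>
      have hk : r (N + 1 + k) ≤ M := ih (by omega)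
      have hl : 1/2 ≤ r (N + 1 + k) := hlow _ (by omega)
      have : N + 1 + (k + 1) = (N + 1 + k) + 1 := by omega
      rw [this, hrec]
      have hg := hgb (r (N + 1 + k)) hl
      have habs : |r (N + 1 + k) - 1| ≤ M - 1 := by
        rw [abs_le]; constructor <;> nlinarith
      have he := he1 ((N + 1 + k) + 1)
      have he0' := he0 ((N + 1 + k) + 1)
      nlinarith [hg1 (N + 1 + k)]
  -- contraction inequality
  have hcontr : ∀ n, N + 1 ≤ n → |r (n + 1) - 1| ≤ |r n - 1| / 2 + (1 + M) * (1 - e (n + 1)) := by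
    intro n hn
    have hl := hlow n hn
    have hu := hup n hn
    have hg := hgb (r n) hl
    have hg1' := hg1 n
    have habs : |r n - 1| ≤ M - 1 := by rw [abs_le]; constructor <;> nlinarith
    have he := he1 (n + 1)
    have he0' := he0 (n + 1)
    rw [hrec]
    set g := (1 + r n) ^ 2 / (4 * r n) with hgdef
    have key : g * e (n + 1) - 1 = (g - 1) - g * (1 - e (n + 1)) := by ring
    rw [key]
    have hgub : g ≤ 1 + M := by nlinarith
    have t1 : |(g - 1) - g * (1 - e (n + 1))| ≤ (g - 1) + g * (1 - e (n + 1)) := by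
      refine le_trans (abs_sub _ _) ?_
      rw [abs_of_nonneg (by linarith : (0:ℝ) ≤ g - 1),
        abs_of_nonneg (by nlinarith : (0:ℝ) ≤ g * (1 - e (n + 1)))]
    have t2 : g - 1 ≤ |r n - 1| / 2 := by linarith
    have t3 : g * (1 - e (n + 1)) ≤ (1 + M) * (1 - e (n + 1)) := by nlinarith
    linarith
  -- apply half_contract
  have habs0 : Tendsto (fun n => |r n - 1|) atTop (nhds 0) := by
    apply half_contract _ (fun n => (1 + M) * (1 - e (n + 1))) (fun n => abs_nonneg _) ?_ (N + 1)
      hcontr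
    have h1 : Tendsto (fun n => 1 - e (n + 1)) atTop (nhds 0) := by
      have := (tendsto_const_nhds (x := (1:ℝ)) (f := atTop)).sub
        (helim.comp (tendsto_add_atTop_nat 1))
      simpa using this
    simpa using h1.const_mul (1 + M)
  have : Tendsto (fun n => r n - 1) atTop (nhds 0) :=
    (tendsto_zero_iff_abs_tendsto_zero _).mpr habs0
  have := this.add (tendsto_const_nhds (x := (1:ℝ)))
  simpa using this

lemma ratio_part (L : ℝ) (A B C D : ℕ → ℝ)
    (hD : ∀ n, 0 < D n) (hDC : ∀ n, D n < C n) (hB : ∀ n, 0 < B n) (hBA : ∀ n, B n < A n)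
    (hsum : ∀ n, C n + D n ≤ A n + B n)
    (hAlim : Tendsto A atTop (nhds L)) (hBlim : Tendsto B atTop (nhds L))
    (hClim : Tendsto C atTop (nhds L)) (hDlim : Tendsto D atTop (nhds L)) (hL : 0 < L)
    (hrecAB : ∀ n, A (n + 1) ^ 2 - B (n + 1) ^ 2 = ((A n - B n) + (C n - D n)) ^ 2 / 16)
    (hrecCD : ∀ n, C (n + 1) ^ 2 - D (n + 1) ^ 2 = (A n - B n) * (C n - D n) / 4) :
    Tendsto (fun n => (A n ^ 2 - B n ^ 2) / (C n ^ 2 - D n ^ 2)) atTop (nhds 1) := by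
  set e := fun n => (C n + D n) / (A n + B n) with he
  set r := fun n => (A n - B n) / (C n - D n) with hr
  have hABpos : ∀ n, 0 < A n + B n := fun n => by have := hB n; have := hBA n; linarith
  have hCDpos : ∀ n, 0 < C n + D n := fun n => by have := hD n; have := hDC n; linarith
  have hx : ∀ n, 0 < A n - B n := fun n => sub_pos.mpr (hBA n)
  have hy : ∀ n, 0 < C n - D n := fun n => sub_pos.mpr (hDC n)
  have he0 : ∀ n, 0 < e n := fun n => div_pos (hCDpos n) (hABpos n)
  have he1 : ∀ n, e n ≤ 1 := fun n => by
    rw [he]; exact div_le_one_of_le₀ (hsum n) (hABpos n).le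
  have helim : Tendsto e atTop (nhds 1) := by
    have h2 : (0:ℝ) < L + L := by linarith
    have := (hClim.add hDlim).div (hAlim.add hBlim) (ne_of_gt h2)
    rwa [div_self (ne_of_gt h2)] at this
  have hr0 : ∀ n, 0 < r n := fun n => div_pos (hx n) (hy n)
  have hrec : ∀ n, r (n + 1) = (1 + r n) ^ 2 / (4 * r n) * e (n + 1) := by
    intro n
    have h1 : A (n + 1) - B (n + 1) =
        ((A n - B n) + (C n - D n)) ^ 2 / 16 / (A (n + 1) + B (n + 1)) := by
      rw [eq_div_iff (ne_of_gt (hABpos (n + 1)))]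
      linear_combination hrecAB n
    have h2 : C (n + 1) - D (n + 1) =
        (A n - B n) * (C n - D n) / 4 / (C (n + 1) + D (n + 1)) := by
      rw [eq_div_iff (ne_of_gt (hCDpos (n + 1)))]
      linear_combination hrecCD n
    simp only [hr, he]
    rw [h1, h2]
    have hX := (hx n).ne'
    have hY := (hy n).ne'
    have h3 := (hABpos (n + 1)).ne'
    have h4 := (hCDpos (n + 1)).ne'
    field_simp
    ring
  have hmain := ratio_tendsto r e hr0 he0 he1 helim hrec
  have hfinal := hmain.div helim one_ne_zero
  have heq : ∀ n, (A n ^ 2 - B n ^ 2) / (C n ^ 2 - D n ^ 2) = r n / e n := by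
    intro n
    simp only [hr, he]
    have h1 := (hy n).ne'
    have h2 := (hCDpos n).ne'
    have h3 := (hABpos n).ne'
    have h4 : C n ^ 2 - D n ^ 2 ≠ 0 := by nlinarith [hy n, hCDpos n]
    field_simp
    ring
  have := hfinal.congr fun n => (heq n).symm
  simpa using this

theorem stmt8 (c₁ c₂ c₃ c₄ : ℝ) (h4 : 0 < c₄) (h34 : c₄ < c₃) (h23 : c₃ < c₂)
    (h12 : c₂ < c₁) :
    Filter.Tendsto (fun n =>
        ((m^[n] (c₁, c₂, c₃, c₄)).1 ^ 2 - (m^[n] (c₁, c₂, c₃, c₄)).2.1 ^ 2) /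
        ((m^[n] (c₁, c₂, c₃, c₄)).2.2.1 ^ 2 - (m^[n] (c₁, c₂, c₃, c₄)).2.2.2 ^ 2))
      Filter.atTop (nhds 1) ∧
    Filter.Tendsto (fun n =>
        ((m^[n] (c₁, c₂, c₃, c₄)).1 ^ 2 - (m^[n] (c₁, c₂, c₃, c₄)).2.2.1 ^ 2) /
        ((m^[n] (c₁, c₂, c₃, c₄)).2.1 ^ 2 - (m^[n] (c₁, c₂, c₃, c₄)).2.2.2 ^ 2))
      Filter.atTop (nhds 1) := by
  set cc : ℝ × ℝ × ℝ × ℝ := (c₁, c₂, c₃, c₄) with hcc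
  have hOrd : ∀ n, Ord4 (m^[n] cc) := by
    intro n
    induction n with
    | zero => exact ⟨h4, h34, h23, h12⟩
    | succ n ih => rw [Function.iterate_succ_apply']; exact ord_m ih
  set A : ℕ → ℝ := fun n => (m^[n] cc).1 with hA
  set B : ℕ → ℝ := fun n => (m^[n] cc).2.1 with hB
  set C : ℕ → ℝ := fun n => (m^[n] cc).2.2.1 with hC
  set D : ℕ → ℝ := fun n => (m^[n] cc).2.2.2 with hD
  have hDpos : ∀ n, 0 < D n := fun n => (hOrd n).1
  have hDC : ∀ n, D n < C n := fun n => (hOrd n).2.1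
  have hCB : ∀ n, C n < B n := fun n => (hOrd n).2.2.1
  have hBA : ∀ n, B n < A n := fun n => (hOrd n).2.2.2
  have hAsucc : ∀ n, A (n + 1) ≤ A n := by
    intro n
    have h := m1_le (hOrd n)
    simp only [hA]
    rw [Function.iterate_succ_apply']
    exact h
  have hDsucc : ∀ n, D n ≤ D (n + 1) := by
    intro n
    have h := m4_ge (hOrd n)
    simp only [hD]
    rw [Function.iterate_succ_apply']
    exact h
  have hD4 : ∀ n, c₄ ≤ D n := by
    intro n
    induction n with
    | zero => simp [hD, hcc]
    | succ n ih => exact ih.trans (hDsucc n)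
  have hA4 : ∀ n, c₄ ≤ A n := fun n => by
    have := hDpos n; have := hDC n; have := hCB n; have := hBA n; have := hD4 n; linarith
  have hdiam : ∀ n, A n - D n ≤ (3 / 4) ^ n * (A 0 - D 0) := by
    intro n
    induction n with
    | zero => simp
    | succ n ih =>
      have h := m_diam (hOrd n)
      have h2 : A (n + 1) - D (n + 1) ≤ 3 / 4 * (A n - D n) := by
        simp only [hA, hD]
        rw [Function.iterate_succ_apply']
        exact h
      have h3 : (0:ℝ) < (3 / 4 : ℝ) := by norm_num
      calc A (n + 1) - D (n + 1) ≤ 3 / 4 * (A n - D n) := h2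
        _ ≤ 3 / 4 * ((3 / 4) ^ n * (A 0 - D 0)) := by nlinarith
        _ = (3 / 4) ^ (n + 1) * (A 0 - D 0) := by rw [pow_succ]; ring
  have hA_anti : Antitone A := antitone_nat_of_succ_le hAsucc
  have hA_bdd : BddBelow (Set.range A) := by
    refine ⟨c₄, fun x hx => ?_⟩
    obtain ⟨n, rfl⟩ := hx
    exact hA4 n
  set L : ℝ := ⨅ n, A n with hL
  have hAlim : Tendsto A atTop (nhds L) := tendsto_atTop_ciInf hA_anti hA_bdd
  have hdiff0 : Tendsto (fun n => A n - D n) atTop (nhds 0) := by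
    apply squeeze_zero (fun n => by
      have := hDC n; have := hCB n; have := hBA n; linarith) hdiam
    have := (tendsto_pow_atTop_nhds_zero_of_lt_one (by norm_num : (0:ℝ) ≤ 3 / 4)
      (by norm_num : (3:ℝ) / 4 < 1)).mul_const (A 0 - D 0)
    simpa using this
  have hDlim : Tendsto D atTop (nhds L) := by
    have h := hAlim.sub hdiff0
    rw [sub_zero] at h
    exact h.congr fun n => by ring
  have hBlim : Tendsto B atTop (nhds L) :=
    tendsto_of_tendsto_of_tendsto_of_le_of_le hDlim hAlim
      (fun n => by have := hDC n; have := hCB n; linarith) (fun n => (hBA n).le)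
  have hClim : Tendsto C atTop (nhds L) :=
    tendsto_of_tendsto_of_tendsto_of_le_of_le hDlim hAlim
      (fun n => (hDC n).le) (fun n => by have := hCB n; have := hBA n; linarith)
  have hLpos : 0 < L := lt_of_lt_of_le h4 (ge_of_tendsto' hAlim hA4)
  have hrecAB : ∀ n, A (n + 1) ^ 2 - B (n + 1) ^ 2 = ((A n - B n) + (C n - D n)) ^ 2 / 16 := by
    intro n
    simp only [hA, hB, hC, hD]
    rw [Function.iterate_succ_apply']
    exact sq_id12 (hOrd n)
  have hrecCD : ∀ n, C (n + 1) ^ 2 - D (n + 1) ^ 2 = (A n - B n) * (C n - D n) / 4 := by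
    intro n
    simp only [hA, hB, hC, hD]
    rw [Function.iterate_succ_apply']
    exact sq_id34 (hOrd n)
  have hrecAC : ∀ n, A (n + 1) ^ 2 - C (n + 1) ^ 2 = ((A n - C n) + (B n - D n)) ^ 2 / 16 := by
    intro n
    simp only [hA, hB, hC, hD]
    rw [Function.iterate_succ_apply']
    exact sq_id13 (hOrd n)
  have hrecBD : ∀ n, B (n + 1) ^ 2 - D (n + 1) ^ 2 = (A n - C n) * (B n - D n) / 4 := by
    intro n
    simp only [hA, hB, hC, hD]
    rw [Function.iterate_succ_apply']
    exact sq_id24 (hOrd n)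
  constructor
  · exact ratio_part L A B C D hDpos hDC (fun n => (hDpos n).trans ((hDC n).trans (hCB n))) hBA
      (fun n => by have := hDC n; have := hCB n; have := hBA n; linarith)
      hAlim hBlim hClim hDlim hLpos hrecAB hrecCD
  · exact ratio_part L A C B D hDpos (fun n => (hDC n).trans (hCB n))
      (fun n => (hDpos n).trans (hDC n)) (fun n => (hCB n).trans (hBA n))
      (fun n => by have := hDC n; have := hCB n; have := hBA n; linarith)
      hAlim hClim hBlim hDlim hLpos hrecAC hrecBD
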